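/- Let C ⊆ ℝⁿ be an open convex cone and f : C ∩ ℚⁿ → ℝ≥0 a function that is positively homogeneous of degree one over ℚ, subadditive, and vanishes on a ℚ-basis of ℚⁿ contained in C. Then f extends uniquely to a continuous function on all of C. -/

import Mathlib

/-- A point of `ℝⁿ` all of whose coordinates are rational. -/
def IsRatPoint {n : ℕ} (x : Fin n → ℝ) : Prop := ∀ i, ∃ q : ℚ, x i = (q : ℝ)

/-!
Positive rational combinations of the basis vectors are directions in which `f` cannot increase,
since `f` is subadditive and vanishes on the basis. The open cone `K` of such combinations,
translated to a suitable rational point `l ∈ C`, is a neighbourhood of any given `b ∈ C`, so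
`f ≤ f l` at the rational points near `b`. Homogeneity and subadditivity make `f` convex along
rational segments, and a nonnegative convex function bounded above near `b` oscillates little near
`b`: a point `y` close to `x` is `(1 - t) x + t z` for a small rational `t` and a point `z` still in
the bounded region. Hence `f` extends continuously from the dense set of rational points of `C`,
uniquely by density.
-/

open Filter Topology Metric Set

section RatPoint

variable {n : ℕ} {x y : Fin n → ℝ}

theorem IsRatPoint.add (hx : IsRatPoint x) (hy : IsRatPoint y) : IsRatPoint (x + y) := fun i => by
  obtain ⟨p, hp⟩ := hx i
  obtain ⟨q, hq⟩ := hy i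
  exact ⟨p + q, by simp [hp, hq]⟩

theorem IsRatPoint.sub (hx : IsRatPoint x) (hy : IsRatPoint y) : IsRatPoint (x - y) := fun i => by
  obtain ⟨p, hp⟩ := hx i
  obtain ⟨q, hq⟩ := hy i
  exact ⟨p - q, by simp [hp, hq]⟩

theorem IsRatPoint.rat_smul (q : ℚ) (hx : IsRatPoint x) : IsRatPoint ((q : ℝ) • x) := fun i => by
  obtain ⟨p, hp⟩ := hx i
  exact ⟨q * p, by simp [hp]⟩

theorem dense_setOf_isRatPoint : Dense {x : Fin n → ℝ | IsRatPoint x} := by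
  convert dense_pi univ fun (_ : Fin n) _ => Rat.denseRange_cast (𝕜 := ℝ) using 1
  ext x
  simp [IsRatPoint, eq_comm]

theorem Module.Basis.isRatPoint_equivFun (B : Module.Basis (Fin n) ℝ (Fin n → ℝ))
    (hB : ∀ i, IsRatPoint (B i)) (hx : IsRatPoint x) :
    IsRatPoint (B.equivFun x) := by
  let castVec : (Fin n → ℚ) →ₗ[ℚ] (Fin n → ℝ) :=
    LinearMap.pi fun j => (Algebra.linearMap ℚ ℝ).comp (LinearMap.proj j)
  have hrange : ∀ {v}, IsRatPoint v → ∃ v', castVec v' = v := fun hv => by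
    choose v' hv' using hv
    exact ⟨v', funext fun j => (hv' j).symm⟩
  choose B' hB' using fun i => hrange (hB i)
  have hindep : LinearIndependent ℚ B' := by
    refine LinearIndependent.of_comp castVec ?_
    convert B.linearIndependent.restrict_scalars' ℚ
    exact funext hB'
  have hspan : Submodule.span ℚ (range B') = ⊤ :=
    hindep.span_eq_top_of_card_eq_finrank' (by simp)
  obtain ⟨x', rfl⟩ := hrange hx
  obtain ⟨c, hc⟩ :=
    (Submodule.mem_span_range_iff_exists_fun ℚ).1 (hspan ▸ Submodule.mem_top : x' ∈ _)
  have : castVec x' = B.equivFun.symm fun i => (c i : ℝ) := by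
    simp [← hc, map_sum, hB', Basis.equivFun_symm_apply, Rat.cast_smul_eq_qsmul]
  rw [this, LinearEquiv.apply_symm_apply]
  exact fun i => ⟨c i, rfl⟩

end RatPoint

theorem Dense.existsUnique_continuous_extension {X Y : Type*} [TopologicalSpace X] [MetricSpace Y]
    [CompleteSpace Y] {S : Set X} (hS : Dense S) (φ : X → Y)
    (hφ : ∀ b, ∀ ε > 0, ∃ U ∈ 𝓝 b, ∀ x ∈ U ∩ S, ∀ y ∈ U ∩ S, dist (φ x) (φ y) < ε) :
    ∃! g : X → Y, Continuous g ∧ ∀ x ∈ S, g x = φ x := by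
  have hcauchy : ∀ b, Cauchy (map (fun x : S => φ x) (comap ((↑) : S → X) (𝓝 b))) := fun b => by
    have := hS.isDenseInducing_val.comap_nhds_neBot b
    refine Metric.cauchy_iff.2 ⟨map_neBot, fun ε hε => ?_⟩
    obtain ⟨U, hU, hφU⟩ := hφ b ε hε
    refine ⟨_, image_mem_map (preimage_mem_comap hU), ?_⟩
    rintro _ ⟨x, hx, rfl⟩ _ ⟨y, hy, rfl⟩
    exact hφU x ⟨hx, x.2⟩ y ⟨hy, y.2⟩
  have hcont : Continuous (fun x : S => φ x) := continuous_iff_continuousAt.2 fun x =>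
    Metric.tendsto_nhds.2 fun ε hε => by
      obtain ⟨U, hU, hφU⟩ := hφ x ε hε
      filter_upwards [continuous_subtype_val.continuousAt.preimage_mem_nhds hU] with y hy
      exact hφU y ⟨hy, y.2⟩ x ⟨mem_of_mem_nhds hU, x.2⟩
  refine ⟨hS.extend (fun x : S => φ x), ⟨hS.isDenseInducing_val.continuous_extend_of_cauchy hcauchy,
    fun x hx => hS.extend_eq hcont ⟨x, hx⟩⟩, ?_⟩
  rintro g ⟨hg, hgφ⟩
  exact (hS.extend_unique (fun x => hgφ x x.2) hg).symm

section Sublinear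

variable {n : ℕ} {C : Set (Fin n → ℝ)} {f : (Fin n → ℝ) → ℝ}

theorem add_sum_smul_mem_and_le {ι : Type*}
    (hcone : ∀ x ∈ C, ∀ c : ℝ, 0 < c → c • x ∈ C) (hadd : ∀ x ∈ C, ∀ y ∈ C, x + y ∈ C)
    (hhom : ∀ x ∈ C, IsRatPoint x → ∀ q : ℚ, 0 < q → f ((q : ℝ) • x) = (q : ℝ) * f x)
    (hsub : ∀ x ∈ C, ∀ y ∈ C, IsRatPoint x → IsRatPoint y → f (x + y) ≤ f x + f y)
    {a : ι → Fin n → ℝ} (haC : ∀ i, a i ∈ C) (haQ : ∀ i, IsRatPoint (a i))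
    (hzero : ∀ i, f (a i) = 0) {d : ι → ℚ} (hd : ∀ i, 0 < d i) (s : Finset ι) :
    ∀ x ∈ C, IsRatPoint x → x + ∑ i ∈ s, (d i : ℝ) • a i ∈ C ∧
      f (x + ∑ i ∈ s, (d i : ℝ) • a i) ≤ f x := by
  classical
  induction s using Finset.induction_on with
  | empty => simpa using fun x hx _ => hx
  | insert i s hi ih =>
    intro x hxC hxQ
    have hiC : (d i : ℝ) • a i ∈ C := hcone _ (haC i) _ (by exact_mod_cast hd i)
    have hiQ : IsRatPoint ((d i : ℝ) • a i) := (haQ i).rat_smul _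
    have hfi : f ((d i : ℝ) • a i) = 0 := by rw [hhom _ (haC i) (haQ i) _ (hd i), hzero, mul_zero]
    obtain ⟨hC, hle⟩ := ih _ (hadd _ hxC _ hiC) (hxQ.add hiQ)
    rw [Finset.sum_insert hi, ← add_assoc]
    refine ⟨hC, hle.trans ?_⟩
    simpa [hfi] using hsub _ hxC _ hiC hxQ hiQ

theorem map_convexComb_sub_le
    (hcone : ∀ x ∈ C, ∀ c : ℝ, 0 < c → c • x ∈ C) (hnonneg : ∀ x ∈ C, IsRatPoint x → 0 ≤ f x)
    (hhom : ∀ x ∈ C, IsRatPoint x → ∀ q : ℚ, 0 < q → f ((q : ℝ) • x) = (q : ℝ) * f x)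
    (hsub : ∀ x ∈ C, ∀ y ∈ C, IsRatPoint x → IsRatPoint y → f (x + y) ≤ f x + f y)
    {x z : Fin n → ℝ} (hxC : x ∈ C) (hxQ : IsRatPoint x) (hzC : z ∈ C) (hzQ : IsRatPoint z)
    {t : ℚ} (ht0 : 0 < t) (ht1 : t < 1) :
    f (((1 - t : ℚ) : ℝ) • x + (t : ℝ) • z) - f x ≤ t * f z := by
  have ht1' : 0 < 1 - t := sub_pos.2 ht1
  have hconv := hsub _ (hcone _ hxC _ (by exact_mod_cast ht1'))
    _ (hcone _ hzC _ (by exact_mod_cast ht0)) (hxQ.rat_smul _) (hzQ.rat_smul _)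
  rw [hhom _ hxC hxQ _ ht1', hhom _ hzC hzQ _ ht0] at hconv
  have : (0 : ℝ) ≤ t * f x := mul_nonneg (by exact_mod_cast ht0.le) (hnonneg x hxC hxQ)
  push_cast at hconv ⊢
  linarith

theorem exists_ball_sub_lt_of_bound
    (hcone : ∀ x ∈ C, ∀ c : ℝ, 0 < c → c • x ∈ C) (hnonneg : ∀ x ∈ C, IsRatPoint x → 0 ≤ f x)
    (hhom : ∀ x ∈ C, IsRatPoint x → ∀ q : ℚ, 0 < q → f ((q : ℝ) • x) = (q : ℝ) * f x)
    (hsub : ∀ x ∈ C, ∀ y ∈ C, IsRatPoint x → IsRatPoint y → f (x + y) ≤ f x + f y)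
    {b : Fin n → ℝ} {r M : ℝ} (hr : 0 < r) (hrC : ball b r ⊆ C)
    (hM : ∀ x ∈ ball b r, IsRatPoint x → f x ≤ M) {ε : ℝ} (hε : 0 < ε) :
    ∃ δ > 0, ∀ x ∈ ball b δ, ∀ y ∈ ball b δ, IsRatPoint x → IsRatPoint y → f y - f x < ε := by
  obtain ⟨t, ht0, ht⟩ := exists_rat_btwn (show (0 : ℝ) < min 1 (ε / (|M| + 1)) by positivity)
  have ht1 : (t : ℝ) < 1 := ht.trans_le (min_le_left _ _)
  have htM : t * M < ε := by
    have := (lt_div_iff₀ (by positivity)).1 (ht.trans_le (min_le_right _ _))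
    nlinarith [le_abs_self M]
  refine ⟨t * r / 4, by positivity, fun x hx y hy hxQ hyQ => ?_⟩
  set z := x + ((t⁻¹ : ℚ) : ℝ) • (y - x)
  have hzQ : IsRatPoint z := hxQ.add ((hyQ.sub hxQ).rat_smul _)
  have hz : z ∈ ball b r := by
    rw [mem_ball] at hx hy ⊢
    have hyx : ‖y - x‖ < 2 * (t * r / 4) := by
      rw [← dist_eq_norm]; linarith [dist_triangle_right y x b]
    calc dist z b ≤ dist x b + ‖((t⁻¹ : ℚ) : ℝ) • (y - x)‖ := by
          rw [dist_eq_norm, dist_eq_norm, show z - b = (x - b) + ((t⁻¹ : ℚ) : ℝ) • (y - x) by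
            simp only [z]; abel]
          exact norm_add_le _ _
      _ < t * r / 4 + (t : ℝ)⁻¹ * (2 * (t * r / 4)) := by
          rw [norm_smul, Rat.cast_inv, norm_inv, Real.norm_of_nonneg (by positivity)]
          gcongr
      _ < r := by field_simp; nlinarith
  have hxr : x ∈ ball b r := ball_subset_ball (by nlinarith) hx
  have hyz : ((1 - t : ℚ) : ℝ) • x + (t : ℝ) • z = y := by
    simp only [z, smul_add, smul_smul, Rat.cast_inv]
    rw [mul_inv_cancel₀ (by positivity), one_smul]
    push_cast
    module
  calc f y - f x ≤ t * f z := hyz ▸ map_convexComb_sub_le hcone hnonneg hhom hsub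
        (hrC hxr) hxQ (hrC hz) hzQ (by exact_mod_cast ht0) (by exact_mod_cast ht1)
    _ ≤ t * M := by gcongr; exact hM z hz hzQ
    _ < ε := htM

theorem exists_bound_nhds_of_basis (hopen : IsOpen C)
    (hcone : ∀ x ∈ C, ∀ c : ℝ, 0 < c → c • x ∈ C) (hadd : ∀ x ∈ C, ∀ y ∈ C, x + y ∈ C)
    (hhom : ∀ x ∈ C, IsRatPoint x → ∀ q : ℚ, 0 < q → f ((q : ℝ) • x) = (q : ℝ) * f x)
    (hsub : ∀ x ∈ C, ∀ y ∈ C, IsRatPoint x → IsRatPoint y → f (x + y) ≤ f x + f y)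
    (B : Module.Basis (Fin n) ℝ (Fin n → ℝ)) (hBC : ∀ i, B i ∈ C) (hBQ : ∀ i, IsRatPoint (B i))
    (hzero : ∀ i, f (B i) = 0) {b : Fin n → ℝ} (hb : b ∈ C) :
    ∃ M, ∀ᶠ x in 𝓝 b, IsRatPoint x → f x ≤ M := by
  set K := B.equivFun ⁻¹' univ.pi fun _ => Ioi (0 : ℝ)
  have hK : IsOpen K := (isOpen_set_pi finite_univ fun _ _ => isOpen_Ioi).preimage
    (LinearMap.continuous_of_finiteDimensional B.equivFun.toLinearMap)
  set w := ∑ i, B i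
  have hwK : ∀ s : ℝ, 0 < s → s • w ∈ K := fun s hs => by simp [K, w, hs]
  obtain ⟨s, hsC, hs⟩ : ∃ s : ℝ, b - s • w ∈ C ∧ 0 < s := by
    have : Tendsto (fun s : ℝ => b - s • w) (𝓝[>] 0) (𝓝 b) := by
      have := (by fun_prop : Continuous fun s : ℝ => b - s • w).tendsto 0
      simpa using this.mono_left nhdsWithin_le_nhds
    exact ((this.eventually (hopen.mem_nhds hb)).and self_mem_nhdsWithin).exists
  obtain ⟨l, ⟨hlC, hlK⟩, hlQ⟩ := dense_setOf_isRatPoint.inter_open_nonempty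
    (C ∩ (b - ·) ⁻¹' K) (hopen.inter (hK.preimage (by fun_prop)))
    ⟨b - s • w, hsC, by simpa using hwK s hs⟩
  refine ⟨f l, ?_⟩
  have hlb : (· - l) ⁻¹' K ∈ 𝓝 b := (hK.preimage (by fun_prop)).mem_nhds hlK
  filter_upwards [hlb] with x hxK hxQ
  choose d hd using B.isRatPoint_equivFun hBQ (hxQ.sub hlQ)
  have hdpos : ∀ i, 0 < d i := fun i => by simpa [hd i] using hxK i (mem_univ i)
  have hx : x = l + ∑ i, (d i : ℝ) • B i := by
    simp_rw [← hd, B.sum_equivFun]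
    abel
  rw [hx]
  exact (add_sum_smul_mem_and_le hcone hadd hhom hsub hBC hBQ hzero hdpos _ l hlC hlQ).2

end Sublinear

theorem stmt1 {n : ℕ} (C : Set (Fin n → ℝ)) (f : (Fin n → ℝ) → ℝ)
    (hopen : IsOpen C)
    (hcone : ∀ x ∈ C, ∀ c : ℝ, 0 < c → c • x ∈ C)
    (hadd : ∀ x ∈ C, ∀ y ∈ C, x + y ∈ C)
    (hnonneg : ∀ x ∈ C, IsRatPoint x → 0 ≤ f x)
    (hhom : ∀ x ∈ C, IsRatPoint x → ∀ q : ℚ, 0 < q → f ((q : ℝ) • x) = (q : ℝ) * f x)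
    (hsub : ∀ x ∈ C, ∀ y ∈ C, IsRatPoint x → IsRatPoint y → f (x + y) ≤ f x + f y)
    (a : Fin n → (Fin n → ℝ))
    (haC : ∀ i, a i ∈ C) (haQ : ∀ i, IsRatPoint (a i))
    (hbasis : LinearIndependent ℝ a)
    (hzero : ∀ i, f (a i) = 0) :
    ∃! g : C → ℝ, Continuous g ∧ ∀ x : C, IsRatPoint x.val → g x = f x.val := by
  set B := basisOfLinearIndependentOfCardEqFinrank' a hbasis (by simp)
  have hB : ⇑B = a := coe_basisOfLinearIndependentOfCardEqFinrank' ..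
  have hS : Dense {x : C | IsRatPoint x.val} :=
    dense_setOf_isRatPoint.preimage hopen.isOpenMap_subtype_val
  refine hS.existsUnique_continuous_extension (fun x : C => f x) fun b ε hε => ?_
  obtain ⟨M, hM⟩ := exists_bound_nhds_of_basis hopen hcone hadd hhom hsub B (hB ▸ haC)
    (hB ▸ haQ) (hB ▸ hzero) b.2
  obtain ⟨r, hr, hrM⟩ := eventually_nhds_iff_ball.1 (hM.and (hopen.mem_nhds b.2))
  obtain ⟨δ, hδ, hδε⟩ := exists_ball_sub_lt_of_bound hcone hnonneg hhom hsub hr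
    (fun x hx => (hrM x hx).2) (fun x hx => (hrM x hx).1) hε
  refine ⟨Subtype.val ⁻¹' ball b δ, continuous_subtype_val.continuousAt.preimage_mem_nhds
    (ball_mem_nhds _ hδ), fun x ⟨hx, hxQ⟩ y ⟨hy, hyQ⟩ => ?_⟩
  rw [Real.dist_eq, abs_sub_lt_iff]
  exact ⟨hδε _ hy _ hx hyQ hxQ, hδε _ hx _ hy hxQ hyQ⟩
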